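/- Let B ⊆ ℝ^N be an open ball, 1 < p < ∞, and let u, ū ∈ C¹(B) with ∫_B |∇u|^p dx < ∞ and ∫_B |∇ū|^p dx < ∞. Assume the orthogonality relation ∫_B |∇ū|^{p−2} ∇ū · (∇u − ∇ū) dx = 0 (the integrand being read as 0 wherever ∇ū = 0). Then there exists a constant C > 0 depending only on N and p such that: if p ≥ 2, ∫_B (|∇u|^p − |∇ū|^p) dx ≥ C ∫_B |∇u − ∇ū|^p dx; and if 1 < p ≤ 2, ∫_B (|∇u|^p − |∇ū|^p) dx ≥ C ∫_B (|∇u| + |∇ū|)^{p−2} |∇u − ∇ū|² dx (the integrand being read as 0 wherever ∇u = ∇ū = 0). -/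

import Mathlib

open MeasureTheory Metric Set
open scoped InnerProductSpace

/-- The Alt–Phillips potential `F_γ(t) = λ₊ (t₊)^γ + λ₋ (t₋)^γ`. -/
noncomputable def Fgam (γ lp lm : ℝ) (t : ℝ) : ℝ :=
  lp * (max t 0) ^ γ + lm * (max (-t) 0) ^ γ

/-- `u` is a `C¹(Ω)` function with `∫_Ω ‖∇u‖^p < ∞` which is a local minimizer of the
functional with density `‖∇v‖^p/p + F(v)`, with respect to Lipschitz competitors on
balls compactly contained in `Ω` agreeing with `u` on the boundary sphere. -/
def APLocMin (N : ℕ) (p : ℝ) (F : ℝ → ℝ) (Ω : Set (EuclideanSpace ℝ (Fin N)))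
    (u : EuclideanSpace ℝ (Fin N) → ℝ) : Prop :=
  (∀ x ∈ Ω, DifferentiableAt ℝ u x) ∧
  ContinuousOn (fun x => gradient u x) Ω ∧
  IntegrableOn (fun x => ‖gradient u x‖ ^ p) Ω volume ∧
  ∀ (z : EuclideanSpace ℝ (Fin N)) (r : ℝ), 0 < r → closure (Metric.ball z r) ⊆ Ω →
    ∀ (v : EuclideanSpace ℝ (Fin N) → ℝ) (K : NNReal),
      LipschitzOnWith K v (closure (Metric.ball z r)) →
      Set.EqOn v u (Metric.sphere z r) →
      (∫ x in Metric.ball z r, (‖gradient u x‖ ^ p / p + F (u x))) ≤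
        ∫ x in Metric.ball z r, (‖gradient v x‖ ^ p / p + F (v x))

/-! Both inequalities are integrated pointwise bounds. For vectors `a`, `b`, the tangent bound
`‖a‖ ^ p ≥ ‖b‖ ^ p + p ‖b‖ ^ (p - 2) ⟪b, a - b⟫` of the convex function `‖·‖ ^ p` improves by a
remainder `c R(a, b)`: with `R = ‖a - b‖ ^ p` for `p ≥ 2`, by a Clarkson-type inequality at the
midpoint of `a` and `b`; with `R = (‖a‖ + ‖b‖) ^ (p - 2) ‖a - b‖ ^ 2` for `p ≤ 2`, by reducing to a
one-variable inequality for `t ^ p` proved by monotonicity. Integrated over the ball, the tangent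
term vanishes by the orthogonality relation, and `‖∇u‖ ^ p`, `‖∇ū‖ ^ p` dominate every integrand,
which makes everything integrable. -/

lemma le_of_hasDerivAt_of_sub_mul_nonneg {F F' : ℝ → ℝ} {s t : ℝ}
    (hF : ∀ x ∈ uIcc s t, HasDerivAt F (F' x) x)
    (hsign : ∀ x ∈ uIcc s t, 0 ≤ (t - x) * F' x) : F s ≤ F t := by
  have hcont : ContinuousOn F (uIcc s t) := fun x hx =>
    (hF x hx).continuousAt.continuousWithinAt
  rcases le_total s t with hst | hts
  · rw [uIcc_of_le hst] at hF hsign hcont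
    refine monotoneOn_of_deriv_nonneg (convex_Icc s t) hcont ?_ ?_
      (left_mem_Icc.2 hst) (right_mem_Icc.2 hst) hst <;>
      intro x hx <;> rw [interior_Icc] at hx
    · exact (hF x (Ioo_subset_Icc_self hx)).differentiableAt.differentiableWithinAt
    · rw [(hF x (Ioo_subset_Icc_self hx)).deriv]
      exact nonneg_of_mul_nonneg_right (hsign x (Ioo_subset_Icc_self hx)) (sub_pos.2 hx.2)
  · rw [uIcc_of_ge hts] at hF hsign hcont
    refine antitoneOn_of_deriv_nonpos (convex_Icc t s) hcont ?_ ?_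
      (left_mem_Icc.2 hts) (right_mem_Icc.2 hts) hts <;>
      intro x hx <;> rw [interior_Icc] at hx
    · exact (hF x (Ioo_subset_Icc_self hx)).differentiableAt.differentiableWithinAt
    · rw [(hF x (Ioo_subset_Icc_self hx)).deriv]
      exact nonpos_of_mul_nonneg_right (hsign x (Ioo_subset_Icc_self hx)) (sub_neg.2 hx.1)

namespace Real

lemma rpow_sub_two_mul_sq {x p : ℝ} (hx : 0 ≤ x) (hp : p ≠ 0) :
    x ^ (p - 2) * x ^ 2 = x ^ p := by
  rw [← rpow_natCast, ← rpow_add' hx (by simpa using hp)]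
  norm_num

lemma rpow_sub_one_mul_self {x p : ℝ} (hx : 0 ≤ x) (hp : p ≠ 0) :
    x ^ (p - 1) * x = x ^ p := by
  conv_lhs => enter [2]; rw [← rpow_one x]
  rw [← rpow_add' hx (by simpa using hp)]
  norm_num

lemma add_rpow_le_two_rpow_mul {p a b : ℝ} (hp : 1 ≤ p) (ha : 0 ≤ a) (hb : 0 ≤ b) :
    (a + b) ^ p ≤ 2 ^ (p - 1) * (a ^ p + b ^ p) := by
  lift a to NNReal using ha
  lift b to NNReal using hb
  exact_mod_cast NNReal.rpow_add_le_mul_rpow_add_rpow a b hp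

lemma mul_rpow_sub_one_mul_le {p x y : ℝ} (hp : 1 ≤ p) (hx : 0 ≤ x) (hy : 0 ≤ y) :
    p * (x ^ (p - 1) * y) ≤ (p - 1) * x ^ p + y ^ p := by
  have hp0 : 0 < p := by linarith
  have h := geom_mean_le_arith_mean2_weighted (w₁ := (p - 1) / p) (w₂ := 1 / p)
    (div_nonneg (by linarith) hp0.le) (by positivity)
    (rpow_nonneg hx p) (rpow_nonneg hy p) (by field_simp; ring)
  rw [← rpow_mul hx, ← rpow_mul hy, mul_div_cancel₀ _ hp0.ne', mul_one_div_cancel hp0.ne',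
    rpow_one] at h
  have := mul_le_mul_of_nonneg_left h hp0.le
  field_simp at this ⊢
  linarith

lemma sub_mul_sq_le_rpow_sub_rpow {p s t : ℝ} (hp1 : 1 < p) (hp2 : p ≤ 2)
    (hs : 0 ≤ s) (ht : 0 ≤ t) :
    p * (p - 1) / 2 * ((t + s) ^ (p - 2) * (t - s) ^ 2) ≤
      t ^ p - s ^ p - p * s ^ (p - 1) * (t - s) := by
  have hp0 : p ≠ 0 := by positivity
  rcases hs.eq_or_lt with rfl | hs0
  · rw [add_zero, sub_zero, rpow_sub_two_mul_sq ht hp0, zero_rpow hp0,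
      zero_rpow (by linarith)]
    nlinarith [mul_nonneg (by nlinarith : 0 ≤ 1 - p * (p - 1) / 2) (rpow_nonneg ht p)]
  rcases ht.eq_or_lt with rfl | ht0
  · have e : p * s ^ (p - 1) * s = p * s ^ p := by rw [mul_assoc, rpow_sub_one_mul_self hs hp0]
    rw [zero_add, zero_sub, neg_sq, rpow_sub_two_mul_sq hs hp0, zero_rpow hp0, mul_neg, e]
    nlinarith [mul_nonneg (by nlinarith : 0 ≤ (p - 1) * (1 - p / 2)) (rpow_nonneg hs p)]
  -- `F t = t ^ p`, and `F'` has the sign of `t - x` between `s` and `t`, where `x ≤ t + s`.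
  set K := p * (p - 1) * (t + s) ^ (p - 2)
  set F : ℝ → ℝ := fun x => p * t * x ^ (p - 1) - (p - 1) * x ^ p + K / 2 * (t - x) ^ 2
  have hF : ∀ x ∈ uIcc s t, HasDerivAt F ((t - x) * (p * (p - 1) * x ^ (p - 2) - K)) x := by
    intro x hx
    have hx0 : 0 < x := lt_of_lt_of_le (lt_min hs0 ht0) hx.1
    have h1 := (hasDerivAt_rpow_const (p := p - 1) (Or.inl hx0.ne')).const_mul (p * t)
    have h2 := (hasDerivAt_rpow_const (p := p) (Or.inl hx0.ne')).const_mul (p - 1)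
    have h3 := (((hasDerivAt_id x).const_sub t).fun_pow 2).const_mul (K / 2)
    refine ((h1.sub h2).add h3).congr_deriv ?_
    have hx1 : x ^ (p - 1) = x ^ (p - 2) * x := by rw [← rpow_add_one hx0.ne']; ring_nf
    rw [show p - 1 - 1 = p - 2 by ring, hx1]
    simp only [id, Nat.cast_ofNat]
    ring
  have hsign : ∀ x ∈ uIcc s t, 0 ≤ (t - x) * ((t - x) * (p * (p - 1) * x ^ (p - 2) - K)) := by
    intro x hx
    have hx0 : 0 < x := lt_of_lt_of_le (lt_min hs0 ht0) hx.1
    have hxts : x ≤ t + s := hx.2.trans (max_le (by linarith) (by linarith))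
    have : (t + s) ^ (p - 2) ≤ x ^ (p - 2) := rpow_le_rpow_of_nonpos hx0 hxts (by linarith)
    rw [← mul_assoc]
    exact mul_nonneg (mul_self_nonneg _)
      (sub_nonneg.2 (mul_le_mul_of_nonneg_left this (by nlinarith)))
  have key := le_of_hasDerivAt_of_sub_mul_nonneg hF hsign
  have e_s := rpow_sub_one_mul_self hs hp0
  have e_t := rpow_sub_one_mul_self ht hp0
  simp only [F, K] at key
  linear_combination key + p * e_t - p * e_s

end Real

section NormRpow

variable {E : Type*} [NormedAddCommGroup E]

lemma rpow_sub_two_mul_norm_sub_sq_le {p : ℝ} (hp : p ≠ 0) (a b : E) :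
    (‖a‖ + ‖b‖) ^ (p - 2) * ‖a - b‖ ^ (2:ℝ) ≤ (‖a‖ + ‖b‖) ^ p := by
  rw [Real.rpow_two, ← Real.rpow_sub_two_mul_sq (by positivity) hp]
  gcongr
  exact norm_sub_le a b

variable {α : Type*} [MeasurableSpace α] {μ : Measure α} {A B : α → E}

lemma integrable_of_abs_le_norm_add_norm_rpow {p : ℝ} (hp : 1 ≤ p)
    (hA : Integrable (fun x => ‖A x‖ ^ p) μ) (hB : Integrable (fun x => ‖B x‖ ^ p) μ)
    {f : α → ℝ} (hle : ∀ x, |f x| ≤ (‖A x‖ + ‖B x‖) ^ p) (hf : AEStronglyMeasurable f μ) :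
    Integrable f μ :=
  ((hA.add hB).const_mul (2 ^ (p - 1))).mono' hf <| ae_of_all _ fun x =>
    (hle x).trans (Real.add_rpow_le_two_rpow_mul hp (norm_nonneg _) (norm_nonneg _))

variable [InnerProductSpace ℝ E]

lemma norm_rpow_add_mul_inner_le {p : ℝ} (hp : 1 ≤ p) (a b : E) :
    ‖b‖ ^ p + p * (‖b‖ ^ (p - 2) * ⟪b, a - b⟫_ℝ) ≤ ‖a‖ ^ p := by
  have hp0 : p ≠ 0 := by positivity
  rcases eq_or_ne b 0 with rfl | hb
  · simp [Real.zero_rpow hp0, Real.rpow_nonneg]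
  have hb0 : 0 < ‖b‖ := norm_pos_iff.2 hb
  have hinner : ‖b‖ ^ (p - 2) * ⟪b, a - b⟫_ℝ ≤ ‖b‖ ^ (p - 1) * ‖a‖ - ‖b‖ ^ p :=
    calc ‖b‖ ^ (p - 2) * ⟪b, a - b⟫_ℝ = ‖b‖ ^ (p - 2) * ⟪b, a⟫_ℝ - ‖b‖ ^ p := by
          rw [inner_sub_right, real_inner_self_eq_norm_sq, mul_sub,
            Real.rpow_sub_two_mul_sq hb0.le hp0]
      _ ≤ ‖b‖ ^ (p - 2) * (‖b‖ * ‖a‖) - ‖b‖ ^ p := by gcongr; exact real_inner_le_norm b a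
      _ = ‖b‖ ^ (p - 1) * ‖a‖ - ‖b‖ ^ p := by
          rw [← mul_assoc, ← Real.rpow_add_one hb0.ne']; ring_nf
  nlinarith [Real.mul_rpow_sub_one_mul_le hp hb0.le (norm_nonneg a)]

lemma norm_rpow_add_norm_rpow_le_of_two_le {p : ℝ} (hp : 2 ≤ p) (m d : E) :
    ‖m‖ ^ p + ‖d‖ ^ p ≤ (‖m + d‖ ^ p + ‖m - d‖ ^ p) / 2 := by
  have hq : 1 ≤ p / 2 := by linarith
  have hsq : ∀ v : E, (‖v‖ ^ 2) ^ (p / 2) = ‖v‖ ^ p := fun v => by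
    rw [← Real.rpow_natCast, ← Real.rpow_mul (norm_nonneg v), Nat.cast_ofNat,
      mul_div_cancel₀ p two_ne_zero]
  have hconv := (convexOn_rpow hq).2 (sq_nonneg ‖m + d‖) (sq_nonneg ‖m - d‖)
    (by norm_num : (0:ℝ) ≤ 1 / 2) (by norm_num : (0:ℝ) ≤ 1 / 2) (by norm_num)
  simp only [smul_eq_mul] at hconv
  calc ‖m‖ ^ p + ‖d‖ ^ p = (‖m‖ ^ 2) ^ (p / 2) + (‖d‖ ^ 2) ^ (p / 2) := by rw [hsq, hsq]
    _ ≤ (‖m‖ ^ 2 + ‖d‖ ^ 2) ^ (p / 2) :=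
      Real.add_rpow_le_rpow_add (sq_nonneg _) (sq_nonneg _) hq
    _ = (1 / 2 * ‖m + d‖ ^ 2 + 1 / 2 * ‖m - d‖ ^ 2) ^ (p / 2) := by
      have := parallelogram_law_with_norm ℝ m d
      congr 1
      linarith
    _ ≤ 1 / 2 * (‖m + d‖ ^ 2) ^ (p / 2) + 1 / 2 * (‖m - d‖ ^ 2) ^ (p / 2) := hconv
    _ = (‖m + d‖ ^ p + ‖m - d‖ ^ p) / 2 := by rw [hsq, hsq]; ring

lemma norm_rpow_add_mul_inner_add_norm_sub_rpow_le {p : ℝ} (hp : 2 ≤ p) (a b : E) :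
    ‖b‖ ^ p + p * (‖b‖ ^ (p - 2) * ⟪b, a - b⟫_ℝ) + 2 ^ (1 - p) * ‖a - b‖ ^ p ≤ ‖a‖ ^ p := by
  set d : E := (2:ℝ)⁻¹ • (a - b)
  set m : E := b + d
  have hclark := norm_rpow_add_norm_rpow_le_of_two_le hp m d
  rw [show m + d = a by module, show m - d = b by module] at hclark
  have hsupport := norm_rpow_add_mul_inner_le (p := p) (by linarith) m b
  rw [add_sub_cancel_left, real_inner_smul_right] at hsupport
  have hd : ‖d‖ ^ p = 2⁻¹ * (2 ^ (1 - p) * ‖a - b‖ ^ p) := by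
    rw [norm_smul, Real.mul_rpow (by positivity) (norm_nonneg _), Real.norm_eq_abs,
      abs_of_pos (by norm_num), Real.inv_rpow (by norm_num), Real.rpow_sub (by norm_num),
      Real.rpow_one]
    field_simp
  linarith

lemma norm_rpow_add_mul_inner_add_mul_sq_le {p : ℝ} (hp1 : 1 < p) (hp2 : p ≤ 2) (a b : E) :
    ‖b‖ ^ p + p * (‖b‖ ^ (p - 2) * ⟪b, a - b⟫_ℝ) +
      p * (p - 1) / 2 * ((‖a‖ + ‖b‖) ^ (p - 2) * ‖a - b‖ ^ (2:ℝ)) ≤ ‖a‖ ^ p := by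
  have hp0 : p ≠ 0 := by positivity
  rw [Real.rpow_two]
  rcases eq_or_ne b 0 with rfl | hb
  · simp only [norm_zero, add_zero, sub_zero, inner_zero_left, mul_zero, Real.zero_rpow hp0,
      zero_add, Real.rpow_sub_two_mul_sq (norm_nonneg a) hp0]
    nlinarith [mul_nonneg (by nlinarith : 0 ≤ 1 - p * (p - 1) / 2)
      (Real.rpow_nonneg (norm_nonneg a) p)]
  have hs : 0 < ‖b‖ := norm_pos_iff.2 hb
  set s := ‖b‖
  set t := ‖a‖
  have ht : 0 ≤ t := norm_nonneg a
  have hscalar := Real.sub_mul_sq_le_rpow_sub_rpow hp1 hp2 hs.le ht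
  have hcs : ⟪b, a⟫_ℝ ≤ s * t := real_inner_le_norm b a
  have hnorm : ‖a - b‖ ^ 2 = (t - s) ^ 2 + 2 * (s * t - ⟪b, a⟫_ℝ) := by
    rw [norm_sub_sq_real, real_inner_comm]; ring
  have hs1 : s ^ (p - 2) * s = s ^ (p - 1) := by
    rw [← Real.rpow_add_one hs.ne']; ring_nf
  have hinner : s ^ (p - 2) * ⟪b, a - b⟫_ℝ =
      s ^ (p - 1) * t - s ^ p - s ^ (p - 2) * (s * t - ⟪b, a⟫_ℝ) := by
    rw [inner_sub_right, real_inner_self_eq_norm_sq, ← Real.rpow_sub_two_mul_sq hs.le hp0,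
      ← hs1]
    ring
  have hmono : p * (p - 1) * (t + s) ^ (p - 2) ≤ p * s ^ (p - 2) := by
    have := Real.rpow_le_rpow_of_nonpos hs (by linarith : s ≤ t + s) (by linarith : p - 2 ≤ 0)
    nlinarith [mul_nonneg (by nlinarith : 0 ≤ p * (2 - p))
      (Real.rpow_nonneg (add_nonneg ht hs.le) (p - 2))]
  rw [hnorm, hinner]
  nlinarith [mul_nonneg (sub_nonneg.2 hcs) (sub_nonneg.2 hmono),
    Real.rpow_sub_one_mul_self hs.le hp0]

lemma abs_norm_rpow_mul_inner_le {p : ℝ} (hp : 1 ≤ p) (a b : E) :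
    |‖b‖ ^ (p - 2) * ⟪b, a - b⟫_ℝ| ≤ (‖a‖ + ‖b‖) ^ p := by
  rcases eq_or_ne b 0 with rfl | hb
  · simp [Real.rpow_nonneg]
  have hb0 : 0 < ‖b‖ := norm_pos_iff.2 hb
  have hab : ‖a - b‖ ≤ ‖a‖ + ‖b‖ := norm_sub_le a b
  calc |‖b‖ ^ (p - 2) * ⟪b, a - b⟫_ℝ| ≤ ‖b‖ ^ (p - 2) * (‖b‖ * ‖a - b‖) := by
        rw [abs_mul, abs_of_nonneg (by positivity)]
        gcongr
        exact abs_real_inner_le_norm b (a - b)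
    _ = ‖b‖ ^ (p - 1) * ‖a - b‖ := by
        rw [← mul_assoc, ← Real.rpow_add_one hb0.ne']; ring_nf
    _ ≤ (‖a‖ + ‖b‖) ^ (p - 1) * (‖a‖ + ‖b‖) := by
        gcongr
        linarith [norm_nonneg a]
    _ = (‖a‖ + ‖b‖) ^ p := Real.rpow_sub_one_mul_self (by positivity) (by positivity)

lemma mul_integral_le_integral_norm_rpow_sub {p : ℝ} (hp : 1 ≤ p)
    (hAm : AEStronglyMeasurable A μ) (hBm : AEStronglyMeasurable B μ)
    (hA : Integrable (fun x => ‖A x‖ ^ p) μ) (hB : Integrable (fun x => ‖B x‖ ^ p) μ)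
    (horth : ∫ x, ‖B x‖ ^ (p - 2) * ⟪B x, A x - B x⟫_ℝ ∂μ = 0)
    {c : ℝ} {k : α → ℝ} (hk : Integrable k μ)
    (hle : ∀ x, ‖B x‖ ^ p + p * (‖B x‖ ^ (p - 2) * ⟪B x, A x - B x⟫_ℝ) + c * k x ≤ ‖A x‖ ^ p) :
    c * ∫ x, k x ∂μ ≤ ∫ x, (‖A x‖ ^ p - ‖B x‖ ^ p) ∂μ := by
  have htangent : Integrable (fun x => ‖B x‖ ^ (p - 2) * ⟪B x, A x - B x⟫_ℝ) μ :=
    integrable_of_abs_le_norm_add_norm_rpow hp hA hB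
      (fun x => abs_norm_rpow_mul_inner_le hp (A x) (B x))
      ((hBm.norm.aemeasurable.pow_const _).aestronglyMeasurable.mul (hBm.inner (hAm.sub hBm)))
  have hB' : Integrable (fun x => ‖B x‖ ^ p + p * (‖B x‖ ^ (p - 2) * ⟪B x, A x - B x⟫_ℝ)) μ :=
    hB.add (htangent.const_mul p)
  have hsum : Integrable (fun x => ‖B x‖ ^ p + p * (‖B x‖ ^ (p - 2) * ⟪B x, A x - B x⟫_ℝ) +
      c * k x) μ := hB'.add (hk.const_mul c)
  have := integral_mono hsum hA hle
  rw [integral_add hB' (hk.const_mul c), integral_add hB (htangent.const_mul p),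
    integral_const_mul, integral_const_mul, horth] at this
  rw [integral_sub hA hB]
  linarith

end NormRpow

theorem stmt9_general (N : ℕ) (p : ℝ) (hp : 1 < p) :
    ∃ C : ℝ, 0 < C ∧
      ∀ (z : EuclideanSpace ℝ (Fin N)) (r : ℝ), 0 < r →
      ∀ u w : EuclideanSpace ℝ (Fin N) → ℝ,
        (∀ x ∈ Metric.ball z r, DifferentiableAt ℝ u x) →
        ContinuousOn (fun x => gradient u x) (Metric.ball z r) →
        (∀ x ∈ Metric.ball z r, DifferentiableAt ℝ w x) →
        ContinuousOn (fun x => gradient w x) (Metric.ball z r) →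
        IntegrableOn (fun x => ‖gradient u x‖ ^ p) (Metric.ball z r) volume →
        IntegrableOn (fun x => ‖gradient w x‖ ^ p) (Metric.ball z r) volume →
        (∫ x in Metric.ball z r,
          ‖gradient w x‖ ^ (p - 2) *
            ⟪gradient w x, gradient u x - gradient w x⟫_ℝ) = 0 →
        ((2 ≤ p →
            C * (∫ x in Metric.ball z r, ‖gradient u x - gradient w x‖ ^ p) ≤
              ∫ x in Metric.ball z r, (‖gradient u x‖ ^ p - ‖gradient w x‖ ^ p)) ∧
          (p ≤ 2 →
            C * (∫ x in Metric.ball z r,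
                (‖gradient u x‖ + ‖gradient w x‖) ^ (p - 2) *
                  ‖gradient u x - gradient w x‖ ^ (2 : ℝ)) ≤
              ∫ x in Metric.ball z r, (‖gradient u x‖ ^ p - ‖gradient w x‖ ^ p))) := by
  refine ⟨min (2 ^ (1 - p)) (p * (p - 1) / 2), lt_min (by positivity) (by nlinarith), ?_⟩
  intro z r _ u w _ hu _ hw hIu hIw horth
  have hAm := hu.aestronglyMeasurable (μ := volume) measurableSet_ball
  have hBm := hw.aestronglyMeasurable (μ := volume) measurableSet_ball
  have hdiff := hAm.sub hBm
  constructor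
  · intro hp2
    have hk := integrable_of_abs_le_norm_add_norm_rpow hp.le hIu hIw
      (fun x => (abs_of_nonneg (by positivity)).trans_le
        (Real.rpow_le_rpow (norm_nonneg _) (norm_sub_le (gradient u x) (gradient w x))
          (by positivity)))
      (hdiff.norm.aemeasurable.pow_const p).aestronglyMeasurable
    calc _ ≤ 2 ^ (1 - p) * ∫ x in ball z r, ‖gradient u x - gradient w x‖ ^ p := by
          gcongr
          exact min_le_left _ _
      _ ≤ _ := mul_integral_le_integral_norm_rpow_sub hp.le hAm hBm hIu hIw horth hk
          fun x => norm_rpow_add_mul_inner_add_norm_sub_rpow_le hp2 _ _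
  · intro hp2
    have hk := integrable_of_abs_le_norm_add_norm_rpow hp.le hIu hIw
      (fun x => (abs_of_nonneg (by positivity)).trans_le
        (rpow_sub_two_mul_norm_sub_sq_le (by positivity) (gradient u x) (gradient w x)))
      (((hAm.norm.add hBm.norm).aemeasurable.pow_const _).aestronglyMeasurable.mul
        (hdiff.norm.aemeasurable.pow_const _).aestronglyMeasurable)
    calc _ ≤ p * (p - 1) / 2 * ∫ x in ball z r,
          (‖gradient u x‖ + ‖gradient w x‖) ^ (p - 2) *
            ‖gradient u x - gradient w x‖ ^ (2 : ℝ) := by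
          gcongr
          exact min_le_right _ _
      _ ≤ _ := mul_integral_le_integral_norm_rpow_sub hp.le hAm hBm hIu hIw horth hk
          fun x => norm_rpow_add_mul_inner_add_mul_sq_le hp hp2 _ _

/-- Energy comparison with a `p`-harmonic replacement `w` of `u`: lower bounds for the
energy gap in terms of the gradient difference, in both regimes. -/
theorem stmt9 (N : ℕ) (hN : 1 ≤ N) (p : ℝ) (hp : 1 < p) :
    ∃ C : ℝ, 0 < C ∧
      ∀ (z : EuclideanSpace ℝ (Fin N)) (r : ℝ), 0 < r →
      ∀ u w : EuclideanSpace ℝ (Fin N) → ℝ,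
        (∀ x ∈ Metric.ball z r, DifferentiableAt ℝ u x) →
        ContinuousOn (fun x => gradient u x) (Metric.ball z r) →
        (∀ x ∈ Metric.ball z r, DifferentiableAt ℝ w x) →
        ContinuousOn (fun x => gradient w x) (Metric.ball z r) →
        IntegrableOn (fun x => ‖gradient u x‖ ^ p) (Metric.ball z r) volume →
        IntegrableOn (fun x => ‖gradient w x‖ ^ p) (Metric.ball z r) volume →
        (∫ x in Metric.ball z r,
          ‖gradient w x‖ ^ (p - 2) *
            ⟪gradient w x, gradient u x - gradient w x⟫_ℝ) = 0 →
        ((2 ≤ p →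
            C * (∫ x in Metric.ball z r, ‖gradient u x - gradient w x‖ ^ p) ≤
              ∫ x in Metric.ball z r, (‖gradient u x‖ ^ p - ‖gradient w x‖ ^ p)) ∧
          (p ≤ 2 →
            C * (∫ x in Metric.ball z r,
                (‖gradient u x‖ + ‖gradient w x‖) ^ (p - 2) *
                  ‖gradient u x - gradient w x‖ ^ (2 : ℝ)) ≤
              ∫ x in Metric.ball z r, (‖gradient u x‖ ^ p - ‖gradient w x‖ ^ p))) :=
  stmt9_general N p hp
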